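/- A CRN is strongly tidy if and only if every undecomposable semiformal pathway has a strong closing pathway. -/
import Mathlib


namespace CRNVerif

variable {σ : Type} [DecidableEq σ]

/-- A state is a multiset of species. -/
abbrev State (σ : Type) := Multiset σ
/-- A reaction is a pair (reactants, products) of multisets of species. -/
abbrev Reaction (σ : Type) := Multiset σ × Multiset σ
/-- A pathway is a finite sequence of reactions. -/
abbrev Pathway (σ : Type) := List (Reaction σ)

/-- Result of applying reaction `r` in state `S` (i.e. `S ⊕ r`). -/
def applyRxn (S : State σ) (r : Reaction σ) : State σ := S - r.1 + r.2

/-- Minimal initial state of a pathway: the smallest state in which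
its reactions can occur in succession. -/
def minInit : Pathway σ → State σ
  | [] => 0
  | r :: p => r.1 + (minInit p - r.2)

/-- State reached from `S` after performing all reactions of `p` in order. -/
def finalFrom (S : State σ) : Pathway σ → State σ
  | [] => S
  | r :: p => finalFrom (applyRxn S r) p

/-- The final state of a pathway (starting from its minimal initial state). -/
def finalState (p : Pathway σ) : State σ := finalFrom (minInit p) p

/-- The state `S_i` after the first `i` reactions, starting from the minimal initial state. -/
def stateAt (p : Pathway σ) (i : ℕ) : State σ := finalFrom (minInit p) (p.take i)

/-- A state is formal if it contains only formal species (as given by `fm`). -/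
def FormalState (fm : σ → Bool) (S : State σ) : Prop := ∀ x ∈ S, fm x = true

/-- `Formal(S)`: the multiset obtained by removing all intermediate species from `S`. -/
def formalPart (fm : σ → Bool) (S : State σ) : State σ := S.filter (fun x => fm x = true)

/-- A reaction is trivial if reactants equal products. -/
def TrivialRxn (r : Reaction σ) : Prop := r.1 = r.2

/-- A CRN is a (finite) set of nontrivial reactions. -/
def NontrivialRxns (C : Finset (Reaction σ)) : Prop := ∀ r ∈ C, ¬ TrivialRxn r

/-- A formal CRN contains only formal reactions. -/
def IsFormalCRN (fm : σ → Bool) (C : Finset (Reaction σ)) : Prop :=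
  ∀ r ∈ C, FormalState fm r.1 ∧ FormalState fm r.2

/-- `p` is a pathway of the CRN `C`. -/
def PathwayOf (C : Finset (Reaction σ)) (p : Pathway σ) : Prop := ∀ r ∈ p, r ∈ C

/-- `Interleave l₁ l₂ l`: `l` can be partitioned into the two (order-preserving,
not necessarily contiguous) subsequences `l₁` and `l₂`. -/
inductive Interleave {α : Type u} : List α → List α → List α → Prop
  | nil : Interleave [] [] []
  | left {a : α} {l₁ l₂ l : List α} : Interleave l₁ l₂ l → Interleave (a :: l₁) l₂ (a :: l)
  | right {a : α} {l₁ l₂ l : List α} : Interleave l₁ l₂ l → Interleave l₁ (a :: l₂) (a :: l)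

/-- `InterleaveMany qs p`: `p` is generated by interleaving the lists in `qs`. -/
inductive InterleaveMany {α : Type u} : List (List α) → List α → Prop
  | nil : InterleaveMany [] []
  | cons {q r p : List α} {qs : List (List α)} :
      Interleave q r p → InterleaveMany qs r → InterleaveMany (q :: qs) p

/-- A pathway is semiformal if its minimal initial state is formal. -/
def Semiformal (fm : σ → Bool) (p : Pathway σ) : Prop := FormalState fm (minInit p)

/-- A formal pathway: a (nonempty) pathway whose minimal initial state and
final state are both formal. -/
def FormalPathway (fm : σ → Bool) (p : Pathway σ) : Prop :=
  p ≠ [] ∧ FormalState fm (minInit p) ∧ FormalState fm (finalState p)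

/-- A formal pathway is decomposable if it can be partitioned into two nonempty
subsequences that are each formal pathways. -/
def FDecomposable (fm : σ → Bool) (p : Pathway σ) : Prop :=
  ∃ q₁ q₂, q₁ ≠ [] ∧ q₂ ≠ [] ∧ Interleave q₁ q₂ p ∧
    FormalPathway fm q₁ ∧ FormalPathway fm q₂

/-- A prime formal pathway is a formal pathway that is not decomposable. -/
def PrimePathway (fm : σ → Bool) (p : Pathway σ) : Prop :=
  FormalPathway fm p ∧ ¬ FDecomposable fm p

/-- The formal basis: the set of (initial state, final state) pairs of prime
formal pathways of `C`. -/
def formalBasis (fm : σ → Bool) (C : Finset (Reaction σ)) : Set (Reaction σ) :=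
  { r | ∃ p, PathwayOf C p ∧ PrimePathway fm p ∧ r = (minInit p, finalState p) }

/-- Two sets of reactions are equal up to addition/removal of trivial reactions. -/
def EqUpToTrivial (A B : Set (Reaction σ)) : Prop :=
  {r ∈ A | ¬ TrivialRxn r} = {r ∈ B | ¬ TrivialRxn r}

/-- The reaction at (0-based) index `j` of `p` is a turning point:
before it only formal species of the initial state appear, from it on only formal
species of the final state appear, and at the moment the turning point fires,
no formal species are left over. -/
def TurningAt (fm : σ → Bool) (p : Pathway σ) (j : ℕ) : Prop :=
  ∃ h : j < p.length,
    (∀ i ≤ j, formalPart fm (stateAt p i) ≤ minInit p) ∧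
    (∀ i, j < i → i ≤ p.length → formalPart fm (stateAt p i) ≤ finalState p) ∧
    formalPart fm (stateAt p j - (p.get ⟨j, h⟩).1) = 0

/-- A regular formal pathway: one that implements a formal reaction,
i.e. has a turning point. -/
def RegularPathway (fm : σ → Bool) (p : Pathway σ) : Prop :=
  FormalPathway fm p ∧ ∃ j, TurningAt fm p j

/-- A CRN is regular if every prime formal pathway is regular. -/
def RegularCRN (fm : σ → Bool) (C : Finset (Reaction σ)) : Prop :=
  ∀ p, PathwayOf C p → PrimePathway fm p → RegularPathway fm p

/-- `q` is a strong closing pathway for `p` (within CRN `C`): it can occur in the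
final state of `p`, consumes no formal species, and leads back to a formal state. -/
def ClosingPathway (fm : σ → Bool) (C : Finset (Reaction σ)) (p q : Pathway σ) : Prop :=
  PathwayOf C q ∧ minInit q ≤ finalState p ∧ (∀ r ∈ q, formalPart fm r.1 = 0) ∧
  FormalState fm (finalFrom (finalState p) q)

/-- A CRN is strongly tidy if every semiformal pathway has a strong closing pathway. -/
def StronglyTidy (fm : σ → Bool) (C : Finset (Reaction σ)) : Prop :=
  ∀ p, PathwayOf C p → Semiformal fm p → ∃ q, ClosingPathway fm C p q

/-- A semiformal pathway is decomposable if it can be partitioned into two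
nonempty subsequences that are each semiformal. -/
def SDecomposable (fm : σ → Bool) (p : Pathway σ) : Prop :=
  ∃ q₁ q₂, q₁ ≠ [] ∧ q₂ ≠ [] ∧ Interleave q₁ q₂ p ∧ Semiformal fm q₁ ∧ Semiformal fm q₂

/-- The width of a pathway: the maximum size of the states it passes through. -/
def width (p : Pathway σ) : ℕ :=
  ((List.range (p.length + 1)).map (fun i => Multiset.card (stateAt p i))).foldr max 0

/-- The branching factor of a CRN. -/
def branching (C : Finset (Reaction σ)) : ℕ :=
  C.sup (fun r => max (Multiset.card r.1) (Multiset.card r.2))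

/-- Formal state `T` is reachable from `S` via reactions of `C`. -/
def Reachable (C : Finset (Reaction σ)) (S T : State σ) : Prop :=
  ∃ p, PathwayOf C p ∧ minInit p ≤ S ∧ finalFrom S p = T

/-- `C` and `C'` share no intermediate species: any species occurring in both
CRNs is formal. -/
def NoSharedIntermediates (fm : σ → Bool) (C C' : Finset (Reaction σ)) : Prop :=
  ∀ r ∈ C, ∀ r' ∈ C', ∀ x : σ, x ∈ r.1 + r.2 → x ∈ r'.1 + r'.2 → fm x = true

/-- The formal closure of a pathway: the minimal state containing the formal part
of every state along the pathway. -/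
def formalClosure (fm : σ → Bool) (p : Pathway σ) : State σ :=
  ((List.range (p.length + 1)).map (fun i => formalPart fm (stateAt p i))).foldr (· ∪ ·) 0

/-- The decomposed final states of a semiformal pathway: all pairs of final
states arising from decompositions into two (nonempty) semiformal pathways. -/
def DFS (fm : σ → Bool) (p : Pathway σ) : Set (State σ × State σ) :=
  { T | ∃ q₁ q₂, q₁ ≠ [] ∧ q₂ ≠ [] ∧ Interleave q₁ q₂ p ∧
        Semiformal fm q₁ ∧ Semiformal fm q₂ ∧ T = (finalState q₁, finalState q₂) }

/-- The minimal state containing the formal parts of all states strictly after index `j`. -/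
def rfsAt (fm : σ → Bool) (p : Pathway σ) (j : ℕ) : State σ :=
  (((List.range (p.length + 1)).filter (fun i => j < i)).map
      (fun i => formalPart fm (stateAt p i))).foldr (· ∪ ·) 0

/-- The regular final states of a pathway: the minimal states `T` witnessed by
potential turning point reactions. -/
def RFS (fm : σ → Bool) (p : Pathway σ) : Set (State σ) :=
  { T | ∃ j, ∃ h : j < p.length,
      (∀ i ≤ j, formalPart fm (stateAt p i) ≤ minInit p) ∧
      formalPart fm (stateAt p j - (p.get ⟨j, h⟩).1) = 0 ∧
      T = rfsAt fm p j }

/-- The signature of a semiformal pathway: (initial state, final state, width,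
formal closure, DFS, RFS). -/
def signature (fm : σ → Bool) (p : Pathway σ) :
    State σ × State σ × ℕ × State σ × Set (State σ × State σ) × Set (State σ) :=
  (minInit p, finalState p, width p, formalClosure fm p, DFS fm p, RFS fm p)

/-- An annotated prime pathway: exactly its chosen turning point is annotated,
with the corresponding formal basis reaction. -/
def GoodAnnotation (fm : σ → Bool) (ap : List (Reaction σ × Option (Reaction σ))) : Prop :=
  PrimePathway fm (ap.map Prod.fst) ∧
  ∃ j, TurningAt fm (ap.map Prod.fst) j ∧
    ap.map Prod.snd = (List.range ap.length).map
      (fun i => if i = j then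
          some (minInit (ap.map Prod.fst), finalState (ap.map Prod.fst)) else none)

/-- `p` can be interpreted as `q`: `q` can occur in the initial state of `p`, has
the same net effect, and there is a decomposition of `p` into prime formal pathways
such that replacing a chosen turning point of each by the corresponding formal basis
element and removing all other reactions yields `q`. -/
def Interpreted (fm : σ → Bool) (p q : Pathway σ) : Prop :=
  minInit q ≤ minInit p ∧
  finalFrom (minInit p) q = finalState p ∧
  ∃ ap : List (Reaction σ × Option (Reaction σ)),
    ap.map Prod.fst = p ∧ (ap.map Prod.snd).reduceOption = q ∧
    ∃ aps, InterleaveMany aps ap ∧ ∀ a ∈ aps, GoodAnnotation fm a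


/-! ### Auxiliary lemmas -/

lemma minInit_cons_le {r : Reaction σ} {c : Pathway σ} {S : State σ}
    (h : minInit (r :: c) ≤ S) : r.1 ≤ S ∧ minInit c ≤ applyRxn S r := by
  rw [Multiset.le_iff_count] at h
  constructor <;> rw [Multiset.le_iff_count] <;> intro x <;> have hx := h x <;>
    simp [minInit, applyRxn, Multiset.count_sub] at hx ⊢ <;> omega

lemma finalFrom_add : ∀ (c : Pathway σ) (S T : State σ), minInit c ≤ S →
    finalFrom (S + T) c = finalFrom S c + T
  | [], _, _, _ => rfl
  | r :: c, S, T, h => by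
    obtain ⟨h1, h2⟩ := minInit_cons_le h
    have key : applyRxn (S + T) r = applyRxn S r + T := by
      ext x
      have := Multiset.le_iff_count.mp h1 x
      simp [applyRxn, Multiset.count_sub]
      omega
    simp only [finalFrom, key]
    exact finalFrom_add c _ T h2

lemma count_net : ∀ (c : Pathway σ) (S : State σ), minInit c ≤ S → ∀ x : σ,
    (finalFrom S c).count x + ((c.map Prod.fst).sum : Multiset σ).count x
      = S.count x + ((c.map Prod.snd).sum : Multiset σ).count x
  | [], _, _, _ => by simp [finalFrom]
  | r :: c, S, h, x => by
    obtain ⟨h1, h2⟩ := minInit_cons_le h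
    have ih := count_net c (applyRxn S r) h2 x
    have h1x := Multiset.le_iff_count.mp h1 x
    have hA : (applyRxn S r).count x = S.count x - r.1.count x + r.2.count x := by
      simp [applyRxn, Multiset.count_sub]
    simp only [finalFrom, List.map_cons, List.sum_cons, Multiset.count_add] at ih ⊢
    omega

lemma interleave_sum {q₁ q₂ p : Pathway σ} (h : Interleave q₁ q₂ p)
    (f : Reaction σ → Multiset σ) :
    (p.map f).sum = (q₁.map f).sum + (q₂.map f).sum := by
  induction h with
  | nil => simp
  | left _ ih => simp only [List.map_cons, List.sum_cons, ih]; ac_rfl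
  | right _ ih => simp only [List.map_cons, List.sum_cons, ih]; ac_rfl

lemma interleave_minInit_le {q₁ q₂ p : Pathway σ} (h : Interleave q₁ q₂ p) :
    minInit p ≤ minInit q₁ + minInit q₂ := by
  induction h with
  | nil => simp [minInit]
  | @left a l₁ l₂ l _ ih =>
    rw [Multiset.le_iff_count] at ih ⊢
    intro x; have := ih x
    simp [minInit, Multiset.count_sub] at this ⊢
    omega
  | @right a l₁ l₂ l _ ih =>
    rw [Multiset.le_iff_count] at ih ⊢
    intro x; have := ih x
    simp [minInit, Multiset.count_sub] at this ⊢
    omega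

lemma interleave_mem {q₁ q₂ p : Pathway σ} (h : Interleave q₁ q₂ p) :
    (∀ r ∈ q₁, r ∈ p) ∧ (∀ r ∈ q₂, r ∈ p) := by
  induction h with
  | nil => simp
  | left _ ih =>
    refine ⟨?_, ?_⟩ <;> intro r hr <;> simp at hr ⊢
    · rcases hr with hr | hr
      · exact Or.inl hr
      · exact Or.inr (ih.1 r hr)
    · exact Or.inr (ih.2 r hr)
  | right _ ih =>
    refine ⟨?_, ?_⟩ <;> intro r hr <;> simp at hr ⊢
    · exact Or.inr (ih.1 r hr)
    · rcases hr with hr | hr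
      · exact Or.inl hr
      · exact Or.inr (ih.2 r hr)

lemma interleave_length {q₁ q₂ p : Pathway σ} (h : Interleave q₁ q₂ p) :
    q₁.length + q₂.length = p.length := by
  induction h <;> simp <;> omega

lemma interleave_append {α : Type} : ∀ (a b : List α), Interleave a b (a ++ b)
  | [], [] => .nil
  | [], x :: b => .right (interleave_append [] b)
  | x :: a, b => .left (interleave_append a b)

lemma formalPart_eq_zero_iff {fm : σ → Bool} {S : State σ} :
    formalPart fm S = 0 ↔ ∀ x, fm x = true → S.count x = 0 := by
  constructor
  · intro h x hx
    have := congrArg (Multiset.count x) h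
    simpa [formalPart, Multiset.count_filter, hx] using this
  · intro h
    ext x
    simp only [formalPart, Multiset.count_filter, Multiset.count_zero]
    split
    · next hx => exact h x hx
    · rfl

lemma formalPart_minInit_zero {fm : σ → Bool} : ∀ c : Pathway σ,
    (∀ r ∈ c, formalPart fm r.1 = 0) → formalPart fm (minInit c) = 0
  | [], _ => by simp [minInit, formalPart]
  | r :: c, h => by
    have h1 : formalPart fm r.1 = 0 := h r (by simp)
    have ih := formalPart_minInit_zero c (fun r hr => h r (by simp [hr]))
    rw [formalPart_eq_zero_iff] at h1 ih ⊢
    intro x hx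
    simp [minInit, Multiset.count_sub, h1 x hx, ih x hx]

lemma finalFrom_append : ∀ (a b : Pathway σ) (S : State σ),
    finalFrom S (a ++ b) = finalFrom (finalFrom S a) b
  | [], _, _ => rfl
  | r :: a, b, S => by simp [finalFrom, finalFrom_append a b]

lemma formalState_count {fm : σ → Bool} {S : State σ} (h : FormalState fm S)
    {x : σ} (hx : fm x = false) : S.count x = 0 := by
  rw [Multiset.count_eq_zero]
  intro hmem
  simp [h x hmem] at hx

/-- A CRN is strongly tidy iff every undecomposable semiformal pathway has a strong
closing pathway. -/
theorem stronglyTidy_iff_undecomposable_closing {σ : Type} [DecidableEq σ]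
    (fm : σ → Bool) (C : Finset (Reaction σ)) (hC : NontrivialRxns C) :
    StronglyTidy fm C ↔
      ∀ p : Pathway σ, PathwayOf C p → Semiformal fm p → ¬ SDecomposable fm p →
        ∃ q, ClosingPathway fm C p q := by
  constructor
  · intro h p hp hs _
    exact h p hp hs
  · intro H
    suffices key : ∀ n (p : Pathway σ), p.length ≤ n → PathwayOf C p → Semiformal fm p →
        ∃ q, ClosingPathway fm C p q by
      intro p hp hs
      exact key p.length p le_rfl hp hs
    intro n
    induction n with
    | zero =>
      intro p hl hp hs
      refine H p hp hs ?_
      rintro ⟨q₁, q₂, hq₁, hq₂, hint, -⟩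
      have := interleave_length hint
      have : q₁.length ≠ 0 := by simpa using hq₁
      omega
    | succ n ih =>
      intro p hl hp hs
      by_cases hd : SDecomposable fm p
      · obtain ⟨q₁, q₂, hq₁, hq₂, hint, hsf₁, hsf₂⟩ := hd
        have hlen := interleave_length hint
        have hl₁ : q₁.length ≠ 0 := by simpa using hq₁
        have hl₂ : q₂.length ≠ 0 := by simpa using hq₂
        have hmem := interleave_mem hint
        have hp₁ : PathwayOf C q₁ := fun r hr => hp r (hmem.1 r hr)
        have hp₂ : PathwayOf C q₂ := fun r hr => hp r (hmem.2 r hr)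
        obtain ⟨c₁, hc₁P, hc₁le, hc₁nf, hc₁fin⟩ := ih q₁ (by omega) hp₁ hsf₁
        obtain ⟨c₂, hc₂P, hc₂le, hc₂nf, hc₂fin⟩ := ih q₂ (by omega) hp₂ hsf₂
        -- notation
        have hF₁ : finalState q₁ = finalState q₁ := rfl
        set D : State σ := minInit q₁ + minInit q₂ - minInit p with hD
        have hminle := interleave_minInit_le hint
        -- D is formal
        have hDf : FormalState fm D := by
          intro x hx
          have hx' : x ∈ minInit q₁ + minInit q₂ :=
            Multiset.mem_of_le tsub_le_self hx
          rcases Multiset.mem_add.mp hx' with hx' | hx'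
          · exact hsf₁ x hx'
          · exact hsf₂ x hx'
        -- sum of final states
        have hsum : finalState q₁ + finalState q₂ = finalState p + D := by
          ext x
          have e1 := count_net q₁ (minInit q₁) le_rfl x
          have e2 := count_net q₂ (minInit q₂) le_rfl x
          have e3 := count_net p (minInit p) le_rfl x
          have s1 := congrArg (Multiset.count x) (interleave_sum hint Prod.fst)
          have s2 := congrArg (Multiset.count x) (interleave_sum hint Prod.snd)
          have hmc := Multiset.le_iff_count.mp hminle x
          simp only [Multiset.count_add] at s1 s2 hmc ⊢
          have hDc : D.count x
              = (minInit q₁).count x + (minInit q₂).count x - (minInit p).count x := by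
            simp [hD, Multiset.count_sub]
          rw [hDc]
          unfold finalState at e1 e2 e3 ⊢
          omega
        -- formal part of closing minInits is zero
        have hz₁ : formalPart fm (minInit c₁) = 0 := formalPart_minInit_zero c₁ hc₁nf
        have hz₂ : formalPart fm (minInit c₂) = 0 := formalPart_minInit_zero c₂ hc₂nf
        -- minInit (c₁ ++ c₂) ≤ finalState p
        have hle12 : minInit c₁ + minInit c₂ ≤ finalState p := by
          have h1 : minInit c₁ + minInit c₂ ≤ finalState p + D := by
            calc minInit c₁ + minInit c₂ ≤ finalState q₁ + finalState q₂ := add_le_add hc₁le hc₂le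
              _ = finalState p + D := hsum
          rw [Multiset.le_iff_count] at h1 ⊢
          intro x
          have hx := h1 x
          simp only [Multiset.count_add] at hx ⊢
          by_cases hfx : fm x = true
          · rw [formalPart_eq_zero_iff] at hz₁ hz₂
            rw [hz₁ x hfx, hz₂ x hfx]
            omega
          · have : D.count x = 0 :=
              formalState_count hDf (by simpa using hfx)
            omega
        have hmle : minInit (c₁ ++ c₂) ≤ finalState p :=
          le_trans (interleave_minInit_le (interleave_append c₁ c₂)) hle12
        -- compute the final state after the closing pathway
        have hG : finalFrom (finalState q₁ + finalState q₂) (c₁ ++ c₂)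
            = finalFrom (finalState q₁) c₁ + finalFrom (finalState q₂) c₂ := by
          rw [finalFrom_append, finalFrom_add c₁ (finalState q₁) (finalState q₂) hc₁le, add_comm,
            finalFrom_add c₂ (finalState q₂) (finalFrom (finalState q₁) c₁) hc₂le, add_comm]
        have hsplit : finalFrom (finalState p + D) (c₁ ++ c₂)
            = finalFrom (finalState p) (c₁ ++ c₂) + D :=
          finalFrom_add _ _ _ hmle
        have hfinal : finalFrom (finalState p) (c₁ ++ c₂) + D
            = finalFrom (finalState q₁) c₁ + finalFrom (finalState q₂) c₂ := by
          rw [← hsplit, ← hsum, hG]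
        -- assemble the closing pathway
        refine ⟨c₁ ++ c₂, ?_, hmle, ?_, ?_⟩
        · intro r hr
          rcases List.mem_append.mp hr with hr | hr
          · exact hc₁P r hr
          · exact hc₂P r hr
        · intro r hr
          rcases List.mem_append.mp hr with hr | hr
          · exact hc₁nf r hr
          · exact hc₂nf r hr
        · intro x hx
          have : x ∈ finalFrom (finalState q₁) c₁ + finalFrom (finalState q₂) c₂ := by
            rw [← hfinal]
            exact Multiset.mem_of_le (Multiset.le_add_right _ _) hx
          rcases Multiset.mem_add.mp this with hx' | hx'
          · exact hc₁fin x hx'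
          · exact hc₂fin x hx'
      · exact H p hp hs hd

end CRNVerif
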